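/- Let (Ω,T) be a dynamical system and A : Ω → SL(2,R) continuous. If there exist L > 0 and N ∈ ℕ such that (1/k) log‖A_k(ω)‖ < L for all ω ∈ Ω and all k with N ≤ k ≤ 2N, then (1/n) log‖A_n(ω)‖ < L for all ω ∈ Ω and all n ≥ N. -/

import Mathlib

open scoped Matrix.Norms.L2Operator
open Filter Topology MeasureTheory

noncomputable abbrev SL2 := Matrix.SpecialLinearGroup (Fin 2) ℝ

noncomputable instance : MetricSpace SL2 :=
  MetricSpace.induced (fun B => (B : Matrix (Fin 2) (Fin 2) ℝ))
    (fun _ _ h => Subtype.ext h) inferInstance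

/-- The `n`-step cocycle iterate `A_n(ω) = A(T^{n-1}ω) ⋯ A(ω)`. -/
noncomputable def coc {Ω : Type*} (T : Ω → Ω) (A : Ω → SL2) : ℕ → Ω → SL2
  | 0, _ => 1
  | n + 1, ω => coc T A n (T ω) * A ω

/-- `log ‖A_n(ω)‖`, using the operator norm on 2×2 real matrices. -/
noncomputable def cocNorm {Ω : Type*} (T : Ω → Ω) (A : Ω → SL2) (n : ℕ) (ω : Ω) : ℝ :=
  Real.log ‖(coc T A n ω : Matrix (Fin 2) (Fin 2) ℝ)‖

/-- Uniform hyperbolicity: `liminf (1/n) log ‖A_n(ω)‖ ≥ L > 0` uniformly in `ω`. -/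
def UniformlyHyperbolic {Ω : Type*} (T : Ω → Ω) (A : Ω → SL2) : Prop :=
  ∃ L > (0 : ℝ), ∀ ε > (0 : ℝ), ∃ N : ℕ, ∀ n ≥ N, ∀ ω,
    L - ε < (1 / n : ℝ) * cocNorm T A n ω

/-- `(1/n) log ‖A_n(ω)‖ → L` uniformly in `ω`. -/
def TendsUniformlyToConst {Ω : Type*} (T : Ω → Ω) (A : Ω → SL2) (L : ℝ) : Prop :=
  ∀ ε > (0 : ℝ), ∃ N : ℕ, ∀ n ≥ N, ∀ ω,
    |(1 / n : ℝ) * cocNorm T A n ω - L| < ε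

/-- A uniform cocycle. -/
def IsUniformCocycle {Ω : Type*} (T : Ω → Ω) (A : Ω → SL2) : Prop :=
  ∃ L : ℝ, TendsUniformlyToConst T A L

/-- Uniform behavior: uniformly hyperbolic, or `(1/n) log ‖A_n(ω)‖ → 0` uniformly. -/
def HasUniformBehavior {Ω : Type*} (T : Ω → Ω) (A : Ω → SL2) : Prop :=
  UniformlyHyperbolic T A ∨ TendsUniformlyToConst T A 0

/-! Since `A_{a+b}(ω) = A_a(T^b ω) A_b(ω)` and the operator norm is submultiplicative,
`log ‖A_n(ω)‖` is subadditive along orbits. Writing `n = kN + r` with `N ≤ r ≤ 2N - 1`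
and peeling off `k` blocks of length `N`, the bound `log ‖A_n‖ < nL` follows from the
bounds for `N` and `r`. -/

section Cocycle

variable {Ω : Type*} (T : Ω → Ω) (A : Ω → SL2)

lemma coc_add (a b : ℕ) (ω : Ω) :
    coc T A (a + b) ω = coc T A a (T^[b] ω) * coc T A b ω := by
  induction b generalizing ω with
  | zero => simp [coc]
  | succ b ih =>
    rw [← add_assoc, coc, coc, ih, Function.iterate_succ_apply, mul_assoc]

lemma norm_coc_pos (n : ℕ) (ω : Ω) : 0 < ‖(coc T A n ω : Matrix (Fin 2) (Fin 2) ℝ)‖ :=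
  norm_pos_iff.2 fun h => (coc T A n ω).det_ne_zero (by rw [h, Matrix.det_zero])

lemma cocNorm_add_le (a b : ℕ) (ω : Ω) :
    cocNorm T A (a + b) ω ≤ cocNorm T A a (T^[b] ω) + cocNorm T A b ω := by
  unfold cocNorm
  rw [← Real.log_mul (norm_coc_pos T A a _).ne' (norm_coc_pos T A b ω).ne']
  refine Real.log_le_log (norm_coc_pos T A _ ω) ?_
  rw [coc_add, Matrix.SpecialLinearGroup.coe_mul]
  exact Matrix.l2_opNorm_mul _ _

end Cocycle

theorem lt_mul_of_subadditive_of_lt_mul_on_block {Ω : Type*} (T : Ω → Ω)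
    (f : ℕ → Ω → ℝ) (hf : ∀ a b ω, f (a + b) ω ≤ f a (T^[b] ω) + f b ω)
    (L : ℝ) (N : ℕ) (hN : 0 < N)
    (h : ∀ ω, ∀ k, N ≤ k → k ≤ 2 * N → f k ω < k * L) :
    ∀ n, N ≤ n → ∀ ω, f n ω < n * L := by
  intro n
  induction n using Nat.strong_induction_on with
  | _ n ih =>
    intro hn ω
    by_cases hn2 : n ≤ 2 * N
    · exact h ω n hn hn2
    obtain ⟨m, rfl⟩ := Nat.exists_eq_add_of_le' hn
    have hm : f m (T^[N] ω) < m * L := ih m (by omega) (by omega) _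
    have hblock : f N ω < N * L := h ω N le_rfl (by omega)
    calc f (m + N) ω ≤ f m (T^[N] ω) + f N ω := hf m N ω
      _ < m * L + N * L := add_lt_add hm hblock
      _ = ((m + N : ℕ) : ℝ) * L := by push_cast; ring

theorem one_div_mul_lt_iff {c x L : ℝ} (hc : 0 < c) : 1 / c * x < L ↔ x < c * L := by
  rw [one_div_mul_eq_div, div_lt_iff₀' hc]

theorem lemma_aux_a_general {Ω : Type*} [MetricSpace Ω]
    (T : Ω ≃ₜ Ω) (A : Ω → SL2)
    (L : ℝ) (N : ℕ) (hN : 0 < N)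
    (h : ∀ ω, ∀ k : ℕ, N ≤ k → k ≤ 2 * N → (1 / k : ℝ) * cocNorm (⇑T) A k ω < L) :
    ∀ ω, ∀ n : ℕ, N ≤ n → (1 / n : ℝ) * cocNorm (⇑T) A n ω < L := by
  intro ω n hn
  rw [one_div_mul_lt_iff (Nat.cast_pos.2 (hN.trans_le hn))]
  refine lt_mul_of_subadditive_of_lt_mul_on_block T _ (cocNorm_add_le T A) L N hN ?_
    n hn ω
  intro ω k hk hk2
  exact (one_div_mul_lt_iff (Nat.cast_pos.2 (hN.trans_le hk))).1 (h ω k hk hk2)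

/-- Lemma 3.1 (a): if `(1/k) log‖A_k(ω)‖ < L` for all `ω` and all `N ≤ k ≤ 2N`,
then `(1/n) log‖A_n(ω)‖ < L` for all `ω` and all `n ≥ N`. -/
theorem lemma_aux_a {Ω : Type*} [MetricSpace Ω] [CompactSpace Ω]
    (T : Ω ≃ₜ Ω) (A : Ω → SL2)
    (hA : Continuous fun ω => (A ω : Matrix (Fin 2) (Fin 2) ℝ))
    (L : ℝ) (hL : 0 < L) (N : ℕ) (hN : 0 < N)
    (h : ∀ ω, ∀ k : ℕ, N ≤ k → k ≤ 2 * N → (1 / k : ℝ) * cocNorm (⇑T) A k ω < L) :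
    ∀ ω, ∀ n : ℕ, N ≤ n → (1 / n : ℝ) * cocNorm (⇑T) A n ω < L :=
  lemma_aux_a_general T A L N hN h
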